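/- arXiv:1906.04932 — 2 statements merged into one kernel-verified Lean document; each statement's English description precedes it below -/
import Mathlib

section
/- Let q be a power of 2 and H a nonempty set of hyperplanes of PG(4,q) such that every point lies in 0, q^3/2, or (q^3+q^2)/2 members of H. Write h = |H|/(q^2/2). Then h is congruent to 0 or 1 modulo q, and q+1 divides h(h-2). -/
open Submodule Set

/-- Points of `PG(4,q)`: one-dimensional subspaces of `F^5`. -/
abbrev PGPoint (F : Type*) [Field F] := {W : Submodule F (Fin 5 → F) // Module.finrank F W = 1}
/-- Lines of `PG(4,q)`: two-dimensional subspaces of `F^5`. -/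
abbrev PGLine (F : Type*) [Field F] := {W : Submodule F (Fin 5 → F) // Module.finrank F W = 2}
/-- Planes of `PG(4,q)`: three-dimensional subspaces of `F^5`. -/
abbrev PGPlane (F : Type*) [Field F] := {W : Submodule F (Fin 5 → F) // Module.finrank F W = 3}
/-- Solids (hyperplanes) of `PG(4,q)`: four-dimensional subspaces of `F^5`. -/
abbrev PGSolid (F : Type*) [Field F] := {W : Submodule F (Fin 5 → F) // Module.finrank F W = 4}

variable {F : Type*} [Field F]

/-- The solids of `H` through the point `P`. -/
def solidsThrough (H : Set (PGSolid F)) (P : PGPoint F) : Set (PGSolid F) :=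
  {S ∈ H | P.1 ≤ S.1}

/-- Hypothesis (I): every point lies on `0`, `q^3/2` or `(q^3+q^2)/2` solids of `H`. -/
def CondI (q : ℕ) (H : Set (PGSolid F)) : Prop :=
  ∀ P : PGPoint F,
    (solidsThrough H P).ncard = 0 ∨
    2 * (solidsThrough H P).ncard = q ^ 3 ∨
    2 * (solidsThrough H P).ncard = q ^ 3 + q ^ 2

/-- A red point: lies on no solid of `H`. -/
def Red (H : Set (PGSolid F)) (P : PGPoint F) : Prop := (solidsThrough H P).ncard = 0

/-- A white point: lies on `q^3/2` solids of `H`. -/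
def White (q : ℕ) (H : Set (PGSolid F)) (P : PGPoint F) : Prop :=
  2 * (solidsThrough H P).ncard = q ^ 3

/-- A black point: lies on `(q^3+q^2)/2` solids of `H`. -/
def Black (q : ℕ) (H : Set (PGSolid F)) (P : PGPoint F) : Prop :=
  2 * (solidsThrough H P).ncard = q ^ 3 + q ^ 2

/-- The black points contained in a subspace `W`. -/
def blackIn (q : ℕ) (H : Set (PGSolid F)) (W : Submodule F (Fin 5 → F)) : Set (PGPoint F) :=
  {P : PGPoint F | Black q H P ∧ P.1 ≤ W}

/-!
Let `m = |H|` and let `w`, `b` be the numbers of white and black points. Counting pairs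
`(P, Π)` with `P ∈ Π ∈ H`, and triples `(P, Π, Σ)` with `Π ≠ Σ` in `H` through `P`, gives
`2m(q³+q²+q+1) = wq³ + b(q³+q²)` and `4m(m-1)(q²+q+1) = wq³(q³-2) + b(q³+q²)(q³+q²-2)`.
As `q³+q²+q+1 = (q+1)(q²+1)` is odd, `q² ∣ 2m`, so `h = 2m/q²`; dividing by `q²` gives
`qw + (q+1)b = h(q+1)(q²+1)` and `q²w + (q+1)²b = h²(q²+q+1) + 2qh`. Modulo `q` these
say `b ≡ h` and `b ≡ h²`, so `q ∣ h(h-1)`, and a prime power dividing the product of two coprime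
numbers divides one of them. Modulo `q+1` the first gives `w ≡ 0`, and then the second
gives `h² - 2h ≡ 0`.
-/

open Finset Module

section LinearAlgebra

variable {F V : Type*} [Field F] [AddCommGroup V] [Module F V]

theorem Submodule.natCard_finrank_eq_one_le [Fintype F] [FiniteDimensional F V]
    (W : Submodule F V) :
    Nat.card {P : {U : Submodule F V // finrank F U = 1} // P.1 ≤ W}
      = ∑ i ∈ range (finrank F W), Fintype.card F ^ i := by
  rw [← Nat.card_eq_fintype_card, ← Projectivization.card_of_finrank F W rfl,
    Nat.card_congr (Projectivization.equivSubmodule F W)]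
  refine Nat.card_congr <| (Equiv.subtypeSubtypeEquivSubtypeInter _ _).trans <|
    (Equiv.subtypeEquivRight fun _ => and_comm).trans <|
    (Equiv.subtypeSubtypeEquivSubtypeInter _ _).symm.trans <|
    ((Submodule.MapSubtype.orderIso W).toEquiv.subtypeEquiv fun U => ?_).symm
  exact (Submodule.finrank_map_subtype_eq W U).symm ▸ Iff.rfl

theorem Submodule.finrank_inf_add_two_of_ne [FiniteDimensional F V] {S T : Submodule F V}
    (hS : finrank F S + 1 = finrank F V) (hT : finrank F T + 1 = finrank F V) (hST : S ≠ T) :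
    finrank F ↥(S ⊓ T) + 2 = finrank F V := by
  have hTS : ¬T ≤ S := fun hle =>
    hST (Submodule.eq_of_le_of_finrank_eq hle (by omega)).symm
  have hlt : finrank F S < finrank F ↥(S ⊔ T) :=
    Submodule.finrank_lt_finrank_of_lt (lt_of_le_of_ne le_sup_left fun h => hTS (h ▸ le_sup_right))
  have hle := Submodule.finrank_le (S ⊔ T)
  have := Submodule.finrank_sup_add_finrank_inf_eq S T
  omega

end LinearAlgebra

theorem Finset.sum_card_offDiag_bipartiteAbove {α β : Type*} (s : Finset α) (t : Finset β)
    (r : α → β → Prop) [∀ a b, Decidable (r a b)] :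
    ∑ a ∈ s, #(t.bipartiteAbove r a).offDiag = ∑ p ∈ t.offDiag, #{a ∈ s | r a p.1 ∧ r a p.2} := by
  refine Eq.trans ?_ (sum_card_bipartiteAbove_eq_sum_card_bipartiteBelow _)
  refine sum_congr rfl fun a _ => congrArg card ?_
  ext p
  simp only [mem_offDiag, mem_bipartiteAbove]
  tauto

theorem Fintype.sum_comp_eq_of_forall_eq_zero_or {α β M : Type*} [Fintype α] [Zero β]
    [DecidableEq β] [AddCommMonoid M] (g : α → β) (φ : β → M) (hφ : φ 0 = 0) {x y : β}
    (hxy : x ≠ y) (hg : ∀ a, g a = 0 ∨ g a = x ∨ g a = y) :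
    ∑ a, φ (g a) = #{a | g a = x} • φ x + #{a | g a = y} • φ y := by
  rw [← sum_const, ← sum_const, sum_filter, sum_filter, ← sum_add_distrib]
  refine Finset.sum_congr rfl fun a _ => ?_
  rcases hg a with h | h | h <;> split_ifs <;> simp_all

theorem mod_eq_zero_or_one_of_dvd_mul_sub_one {q : ℕ} (hq : IsPrimePow q) (h : ℕ)
    (hdvd : (q : ℤ) ∣ h * (h - 1)) : h % q = 0 ∨ h % q = 1 := by
  rcases h with _ | h
  · simp
  have hdvd' : q ∣ (h + 1) * h := by exact_mod_cast (by simpa using hdvd : (q : ℤ) ∣ (h + 1) * h)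
  rcases ((Nat.coprime_self_add_left.mpr (Nat.coprime_one_left h)).isPrimePow_dvd_mul hq).mp hdvd'
    with hq1 | hq0
  · exact Or.inl (Nat.mod_eq_zero_of_dvd hq1)
  · right
    rw [Nat.add_mod, Nat.mod_eq_zero_of_dvd hq0, zero_add, Nat.mod_mod, Nat.mod_eq_of_lt hq.one_lt]
theorem sq_dvd_two_mul_of_eq {q n m c : ℕ} (hq : q = 2 ^ n) (hn : n ≠ 0)
    (hm : 2 * m * ((q + 1) * (q ^ 2 + 1)) = q ^ 2 * c) : q ^ 2 ∣ 2 * m := by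
  subst hq
  have heven : Even (2 ^ n) := (Nat.even_pow' hn).mpr even_two
  have hodd : Odd ((2 ^ n + 1) * ((2 ^ n) ^ 2 + 1)) :=
    heven.add_one.mul (Nat.even_pow.mpr ⟨heven, two_ne_zero⟩).add_one
  have hcop := ((Nat.coprime_two_left.mpr hodd).pow_left n).pow_left 2
  exact hcop.dvd_of_dvd_mul_right ⟨c, hm⟩

theorem Nat.div_half_eq_of_two_mul_eq {a m c : ℕ} (ha : Even a) (ha0 : a ≠ 0)
    (h : 2 * m = a * c) : m / (a / 2) = c := by
  obtain ⟨r, rfl⟩ := ha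
  have hr : (r + r) / 2 = r := by omega
  rw [hr, show m = r * c by linarith, Nat.mul_div_cancel_left _ (by omega)]

theorem dvd_of_incidence_equations {q h w b : ℤ} (hq : q ≠ 0)
    (h₁ : q ^ 2 * h * (q ^ 3 + q ^ 2 + q + 1) = w * q ^ 3 + b * (q ^ 3 + q ^ 2))
    (h₂ : q ^ 2 * h * (q ^ 2 * h - 2) * (q ^ 2 + q + 1)
      = w * (q ^ 3 * (q ^ 3 - 2)) + b * ((q ^ 3 + q ^ 2) * (q ^ 3 + q ^ 2 - 2))) :
    q ∣ h * (h - 1) ∧ (q + 1) ∣ h * (h - 2) := by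
  have e₁ : q * w + (q + 1) * b = h * (q ^ 3 + q ^ 2 + q + 1) :=
    mul_left_cancel₀ (pow_ne_zero 2 hq) (by linear_combination -h₁)
  have e₂ : q ^ 2 * w + (q + 1) ^ 2 * b = h ^ 2 * (q ^ 2 + q + 1) + 2 * q * h :=
    mul_left_cancel₀ (pow_ne_zero 4 hq) (by linear_combination -h₂ + 2 * q ^ 2 * e₁)
  exact ⟨⟨(q - 1) * w + (q + 1) * b - (q + 1) * h ^ 2 - 2 * h + (q ^ 2 + q + 1) * h,
      by linear_combination e₁ - e₂⟩,
    ⟨q * (q ^ 2 + 1) * h + b - q * h ^ 2 - 2 * h, by linear_combination q * e₁ - e₂⟩⟩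

section PG

variable {F : Type*} [Field F]

theorem finrank_inf_pgSolid {S T : PGSolid F} (hST : S ≠ T) : finrank F ↥(S.1 ⊓ T.1) = 3 := by
  have := Submodule.finrank_inf_add_two_of_ne (by simp [S.2]) (by simp [T.2])
    (Subtype.coe_injective.ne hST)
  simp only [finrank_fin_fun] at this
  omega

variable [Fintype F]

noncomputable instance : Fintype (PGPoint F) := Fintype.ofFinite _
noncomputable instance : Fintype (PGSolid F) := Fintype.ofFinite _

open scoped Classical in
theorem card_pgPoint_le (W : Submodule F (Fin 5 → F)) :
    #{P : PGPoint F | P.1 ≤ W} = ∑ i ∈ range (finrank F W), Fintype.card F ^ i := by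
  rw [← Fintype.card_subtype, ← Nat.card_eq_fintype_card]
  convert W.natCard_finrank_eq_one_le

open scoped Classical in
theorem ncard_solidsThrough (H : Set (PGSolid F)) (P : PGPoint F) :
    (solidsThrough H P).ncard = #(H.toFinset.bipartiteAbove (fun P S => P.1 ≤ S.1) P) := by
  rw [← Set.ncard_coe_finset]
  congr 1
  ext S
  simp [solidsThrough]

theorem sum_ncard_solidsThrough (H : Set (PGSolid F)) :
    ∑ P : PGPoint F, (solidsThrough H P).ncard
      = H.ncard * (Fintype.card F ^ 3 + Fintype.card F ^ 2 + Fintype.card F + 1) := by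
  classical
  have hpts (S : PGSolid F) : #{P : PGPoint F | P.1 ≤ S.1}
      = Fintype.card F ^ 3 + Fintype.card F ^ 2 + Fintype.card F + 1 := by
    rw [card_pgPoint_le, S.2]
    simp only [sum_range_succ, sum_range_zero]
    ring
  simp_rw [ncard_solidsThrough, sum_card_bipartiteAbove_eq_sum_card_bipartiteBelow]
  simp only [bipartiteBelow, hpts, sum_const, smul_eq_mul, Set.ncard_eq_toFinset_card']

theorem sum_ncard_solidsThrough_mul_pred (H : Set (PGSolid F)) :
    ∑ P : PGPoint F, (solidsThrough H P).ncard * ((solidsThrough H P).ncard - 1)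
      = H.ncard * (H.ncard - 1) * (Fintype.card F ^ 2 + Fintype.card F + 1) := by
  classical
  have hpts {S T : PGSolid F} (hST : S ≠ T) : #{P : PGPoint F | P.1 ≤ S.1 ∧ P.1 ≤ T.1}
      = Fintype.card F ^ 2 + Fintype.card F + 1 := by
    simp_rw [← le_inf_iff]
    rw [card_pgPoint_le, finrank_inf_pgSolid hST]
    simp only [sum_range_succ, sum_range_zero]
    ring
  simp_rw [ncard_solidsThrough, Nat.mul_sub_one, ← offDiag_card, sum_card_offDiag_bipartiteAbove]
  rw [sum_congr rfl fun p hp => hpts (mem_offDiag.mp hp).2.2, sum_const, smul_eq_mul, offDiag_card,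
    Set.ncard_eq_toFinset_card']

theorem exists_card_white_black (q : ℕ) (hcard : Fintype.card F = q) (H : Set (PGSolid F))
    (hI : CondI q H) :
    ∃ w b : ℕ,
      (2 * H.ncard * (q ^ 3 + q ^ 2 + q + 1) : ℤ) = w * q ^ 3 + b * (q ^ 3 + q ^ 2) ∧
      (2 * H.ncard * (2 * H.ncard - 2) * (q ^ 2 + q + 1) : ℤ)
        = w * (q ^ 3 * (q ^ 3 - 2)) + b * ((q ^ 3 + q ^ 2) * (q ^ 3 + q ^ 2 - 2)) := by
  classical
  set k : PGPoint F → ℕ := fun P => (solidsThrough H P).ncard with hk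
  have hxy : q ^ 3 ≠ q ^ 3 + q ^ 2 := by
    simpa using pow_ne_zero 2 (hcard ▸ Fintype.card_ne_zero : q ≠ 0)
  have hsplit (φ : ℕ → ℤ) (hφ : φ 0 = 0) :
      ∑ P, φ (2 * k P) = #{P | 2 * k P = q ^ 3} • φ (q ^ 3)
        + #{P | 2 * k P = q ^ 3 + q ^ 2} • φ (q ^ 3 + q ^ 2) :=
    Fintype.sum_comp_eq_of_forall_eq_zero_or _ φ hφ hxy fun P =>
      (hI P).imp_left fun h => by simp [hk, h]
  refine ⟨#{P | 2 * k P = q ^ 3}, #{P | 2 * k P = q ^ 3 + q ^ 2}, ?_, ?_⟩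
  · have := hsplit (fun x => x) rfl
    push_cast [nsmul_eq_mul] at this
    have hsum : ∑ P, (k P : ℤ) = H.ncard * (q ^ 3 + q ^ 2 + q + 1) := by
      exact_mod_cast hcard ▸ sum_ncard_solidsThrough H
    rw [← this, ← mul_sum, hsum]
    ring
  · have := hsplit (fun x => x * (x - 2)) (by simp)
    push_cast [nsmul_eq_mul] at this
    have hcast (n : ℕ) : ((n * (n - 1) : ℕ) : ℤ) = n * (n - 1) := by cases n <;> simp
    have hsum : ∑ P, (k P : ℤ) * (k P - 1) = H.ncard * (H.ncard - 1) * (q ^ 2 + q + 1) := by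
      have := congrArg (Nat.cast : ℕ → ℤ) (hcard ▸ sum_ncard_solidsThrough_mul_pred H)
      push_cast [hcast] at this
      exact this
    rw [← this]
    simp_rw [show ∀ x : ℤ, 2 * x * (2 * x - 2) = 4 * (x * (x - 1)) from fun x => by ring]
    rw [← mul_sum, hsum]
    ring

end PG

theorem stmt1_general (q : ℕ) (hq : ∃ n : ℕ, 0 < n ∧ q = 2 ^ n)
    (F : Type*) [Field F] [Fintype F] (hcard : Fintype.card F = q)
    (H : Set (PGSolid F)) (hI : CondI q H)
    (h : ℕ) (hh : h = H.ncard / (q ^ 2 / 2)) :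
    (h % q = 0 ∨ h % q = 1) ∧ ((q : ℤ) + 1) ∣ (h : ℤ) * ((h : ℤ) - 2) := by
  obtain ⟨n, hn, hqn⟩ := hq
  obtain ⟨w, b, h₁, h₂⟩ := exists_card_white_black q hcard H hI
  obtain ⟨c, hc⟩ : q ^ 2 ∣ 2 * H.ncard := by
    refine sq_dvd_two_mul_of_eq hqn hn.ne' (c := q * w + (q + 1) * b) ?_
    zify
    linear_combination h₁
  have hq0 : q ≠ 0 := hqn ▸ pow_ne_zero n two_ne_zero
  have hq_even : Even q := hqn ▸ (Nat.even_pow' hn.ne').mpr even_two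
  obtain rfl : h = c := hh ▸ Nat.div_half_eq_of_two_mul_eq
    (hq_even.pow_of_ne_zero two_ne_zero) (pow_ne_zero 2 hq0) hc
  have hc' : (2 * H.ncard : ℤ) = q ^ 2 * h := by exact_mod_cast hc
  obtain ⟨hdvd, hdvd'⟩ := dvd_of_incidence_equations (q := q) (h := h) (w := w) (b := b)
    (by exact_mod_cast hq0) (by rw [← hc']; linear_combination h₁)
    (by rw [← hc']; linear_combination h₂)
  exact ⟨mod_eq_zero_or_one_of_dvd_mul_sub_one (hqn ▸ Nat.prime_two.isPrimePow.pow hn.ne') h hdvd,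
    hdvd'⟩

theorem stmt1 (q : ℕ) (hq : ∃ n : ℕ, 0 < n ∧ q = 2 ^ n)
    (F : Type*) [Field F] [Fintype F] (hcard : Fintype.card F = q)
    (H : Set (PGSolid F)) (hne : H.Nonempty) (hI : CondI q H)
    (h : ℕ) (hh : h = H.ncard / (q ^ 2 / 2)) :
    (h % q = 0 ∨ h % q = 1) ∧ ((q : ℤ) + 1) ∣ (h : ℤ) * ((h : ℤ) - 2) :=
  stmt1_general q hq F hcard H hI h hh
end

section
/- Let Q be a parabolic quasi-quadric in PG(4,q), q even, with nucleus N, and let H be the set of hyperplanes meeting Q in exactly (q+1)^2 points. Then every point of Q lies in exactly (q^3+q^2)/2 hyperplanes of H, every point other than N and not in Q lies in exactly q^3/2 hyperplanes of H, and N lies in no hyperplane of H. -/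
open Submodule Set

variable {F : Type*} [Field F]

/-- The points of the set `Q` lying in the subspace `W`. -/
def pointsIn (Q : Set (PGPoint F)) (W : Submodule F (Fin 5 → F)) : Set (PGPoint F) :=
  {P ∈ Q | P.1 ≤ W}

/-- A parabolic quasi-quadric in `PG(4,q)`, `q` even, with nucleus `N`:
a set of `q^3+q^2+q+1` points such that every line through `N` contains exactly one
point of the set, and every hyperplane not through `N` meets it in `q^2+1` or `(q+1)^2`
points. -/
def IsQuasiQuadric (q : ℕ) (Q : Set (PGPoint F)) (N : PGPoint F) : Prop :=
  Q.ncard = q ^ 3 + q ^ 2 + q + 1 ∧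
  (∀ ℓ : PGLine F, N.1 ≤ ℓ.1 → (pointsIn Q ℓ.1).ncard = 1) ∧
  (∀ S : PGSolid F, ¬ N.1 ≤ S.1 →
    (pointsIn Q S.1).ncard = q ^ 2 + 1 ∨ (pointsIn Q S.1).ncard = (q + 1) ^ 2)

/-- The point set of the quadric defined by the quadratic form `φ`. -/
def quadricSet (φ : QuadraticForm F (Fin 5 → F)) : Set (PGPoint F) :=
  {P : PGPoint F | ∀ v ∈ P.1, φ v = 0}

/-- A quadratic form is non-singular if no nonzero singular vector lies in the radical
of its polar form. -/
def Nonsingular (φ : QuadraticForm F (Fin 5 → F)) : Prop :=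
  ∀ v : Fin 5 → F, (∀ w, QuadraticMap.polar (⇑φ) v w = 0) → φ v = 0 → v = 0

/-- `N` is a nucleus of the point set `Q`: every line through `N` meets `Q` in exactly
one point. -/
def IsNucleus (Q : Set (PGPoint F)) (N : PGPoint F) : Prop :=
  ∀ ℓ : PGLine F, N.1 ≤ ℓ.1 → (pointsIn Q ℓ.1).ncard = 1

/-!
For a point `P ≠ N`, let `P₀` be the point of `Q` on the line `PN`, and double count the
incidences between `Q` and the `q³` solids through `P` avoiding `N`. Such a solid meets `Q` in
`(q+1)²` or `q²+1` points according as it is in `H` or not; a point of `Q` other than `P₀` lies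
on `q²` of them, and `P₀` on all `q³` of them if `P₀ = P` and on none otherwise. This gives
`2q·|H_P| = q⁴ + q³` or `q⁴`. No solid of `H` passes through `N`: a solid through `N` meets `Q`
in one point on each of its `q²+q+1` lines through `N`.
-/

open Module

section DoubleCounting

variable {α β : Type*} {s : Set α} {t : Set β}

theorem sum_ncard_sep_comm (hs : s.Finite) (ht : t.Finite) (r : α → β → Prop) :
    ∑ a ∈ hs.toFinset, {b ∈ t | r a b}.ncard = ∑ b ∈ ht.toFinset, {a ∈ s | r a b}.ncard := by
  classical
  convert Finset.sum_card_bipartiteAbove_eq_sum_card_bipartiteBelow r using 2 with a - b -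
  · rw [← ncard_coe_finset]; congr 1; ext; simp [Finset.bipartiteAbove]
  · rw [← ncard_coe_finset]; congr 1; ext; simp [Finset.bipartiteBelow]

theorem ncard_mul_eq_ncard_mul {m n : ℕ} (hs : s.Finite) (ht : t.Finite) (r : α → β → Prop)
    (hm : ∀ a ∈ s, {b ∈ t | r a b}.ncard = m) (hn : ∀ b ∈ t, {a ∈ s | r a b}.ncard = n) :
    s.ncard * m = t.ncard * n := by
  have h := sum_ncard_sep_comm hs ht r
  rwa [Finset.sum_congr rfl (fun a ha => hm a (hs.mem_toFinset.1 ha)),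
    Finset.sum_congr rfl (fun b hb => hn b (ht.mem_toFinset.1 hb)), Finset.sum_const,
    Finset.sum_const, smul_eq_mul, smul_eq_mul, ← ncard_eq_toFinset_card _ hs,
    ← ncard_eq_toFinset_card _ ht] at h

end DoubleCounting

section FiniteVectorSpace

variable {K V : Type*} [Field K] [AddCommGroup V] [Module K V] [Finite V]

instance : Finite (Submodule K V) := Finite.of_injective _ SetLike.coe_injective

theorem ncard_coe_submodule (W : Submodule K V) :
    (W : Set V).ncard = Nat.card K ^ finrank K W := by
  rw [← Nat.card_coe_set_eq]; exact Module.natCard_eq_pow_finrank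

variable [Finite K]

instance : Finite (Dual K V) := Finite.of_injective _ DFunLike.coe_injective

theorem ncard_dualAnnihilator_diff_zero (W : Submodule K V) :
    ((W.dualAnnihilator : Set (Dual K V)) \ {0}).ncard =
      Nat.card K ^ (finrank K V - finrank K W) - 1 := by
  rw [ncard_sdiff_singleton_of_mem W.dualAnnihilator.zero_mem, ncard_coe_submodule,
    ← Subspace.finrank_add_finrank_dualAnnihilator_eq W, Nat.add_sub_cancel_left]

/-- Double count pairs `(φ, U)` with `ker φ = U`: a hyperplane `U ⊇ W` is the kernel of exactly
the `q - 1` nonzero functionals of its one-dimensional annihilator. -/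
theorem sub_one_mul_ncard_hyperplanes_ge (W : Submodule K V) :
    (Nat.card K - 1) * {U : Submodule K V | finrank K U + 1 = finrank K V ∧ W ≤ U}.ncard =
      Nat.card K ^ (finrank K V - finrank K W) - 1 := by
  have h := ncard_mul_eq_ncard_mul (m := 1) (n := Nat.card K - 1)
    (toFinite ((W.dualAnnihilator : Set (Dual K V)) \ {0}))
    (toFinite {U : Submodule K V | finrank K U + 1 = finrank K V ∧ W ≤ U})
    (fun φ U => LinearMap.ker φ = U) (fun φ hφ => ?_) (fun U hU => ?_)
  · rw [ncard_dualAnnihilator_diff_zero, mul_one] at h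
    rw [mul_comm, h]
  · obtain ⟨hφW, hφ⟩ := hφ
    rw [ncard_eq_one]
    refine ⟨LinearMap.ker φ, Set.ext fun U => ⟨fun h => h.2.symm, ?_⟩⟩
    rintro rfl
    refine ⟨⟨Dual.finrank_ker_add_one_of_ne_zero hφ, fun w hw => ?_⟩, rfl⟩
    exact (mem_dualAnnihilator φ).1 hφW w hw
  · obtain ⟨hU, hWU⟩ := hU
    have hfiber : {φ ∈ (W.dualAnnihilator : Set (Dual K V)) \ {0} | LinearMap.ker φ = U} =
        (U.dualAnnihilator : Set (Dual K V)) \ {0} := by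
      ext φ
      simp only [mem_sdiff, SetLike.mem_coe, mem_dualAnnihilator, mem_singleton_iff]
      constructor
      · rintro ⟨⟨-, hφ⟩, rfl⟩
        exact ⟨fun w hw => hw, hφ⟩
      · rintro ⟨hφU, hφ⟩
        have hUφ : U = LinearMap.ker φ := eq_of_le_of_finrank_le (fun w hw => hφU w hw)
          (by have := Dual.finrank_ker_add_one_of_ne_zero hφ; omega)
        exact ⟨⟨fun w hw => hφU w (hWU hw), hφ⟩, hUφ.symm⟩
    rw [hfiber, ncard_dualAnnihilator_diff_zero, ← hU, Nat.add_sub_cancel_left, pow_one]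

end FiniteVectorSpace

theorem finrank_sup_of_finrank_eq_one {K V : Type*} [Field K] [AddCommGroup V] [Module K V]
    [FiniteDimensional K V] {W P : Submodule K V} (hP : finrank K P = 1) (hPW : ¬ P ≤ W) :
    finrank K ↥(W ⊔ P) = finrank K W + 1 := by
  have hsup := finrank_sup_add_finrank_inf_eq W P
  have hinf : finrank K ↥(W ⊓ P) = 0 := by
    by_contra h
    have : W ⊓ P = P := eq_of_le_of_finrank_le inf_le_right (by omega)
    exact hPW (this ▸ inf_le_left)
  omega

theorem PGPoint.eq_of_le {P P' : PGPoint F} (h : P.1 ≤ P'.1) : P = P' :=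
  Subtype.ext (eq_of_le_of_finrank_le h (by rw [P.2, P'.2]))

theorem PGPoint.finrank_sup_of_ne {P P' : PGPoint F} (h : P ≠ P') :
    finrank F ↥(P.1 ⊔ P'.1) = 2 := by
  rw [finrank_sup_of_finrank_eq_one P'.2 fun hle => h (PGPoint.eq_of_le hle).symm, P.2]

namespace IsNucleus

variable {Q : Set (PGPoint F)} {N : PGPoint F}

theorem exists_mem_le (hN : IsNucleus Q N) {ℓ : PGLine F} (hNℓ : N.1 ≤ ℓ.1) :
    ∃ P ∈ Q, P.1 ≤ ℓ.1 := by
  have : (pointsIn Q ℓ.1).Nonempty :=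
    nonempty_of_ncard_ne_zero (by rw [hN ℓ hNℓ]; exact one_ne_zero)
  exact this

theorem eq_of_le {P P' : PGPoint F} (hN : IsNucleus Q N) {ℓ : PGLine F} (hNℓ : N.1 ≤ ℓ.1)
    (hP : P ∈ Q) (hPℓ : P.1 ≤ ℓ.1) (hP' : P' ∈ Q) (hP'ℓ : P'.1 ≤ ℓ.1) : P = P' :=
  (ncard_le_one (finite_of_ncard_ne_zero (by rw [hN ℓ hNℓ]; exact one_ne_zero))).1
    (hN ℓ hNℓ).le _ ⟨hP, hPℓ⟩ _ ⟨hP', hP'ℓ⟩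

theorem notMem (hN : IsNucleus Q N) (hQ : 1 < Q.ncard) : N ∉ Q := by
  intro hNQ
  obtain ⟨P, hPQ, hPN⟩ := exists_ne_of_one_lt_ncard hQ N
  exact hPN (hN.eq_of_le (ℓ := ⟨_, PGPoint.finrank_sup_of_ne hPN⟩) le_sup_right
    hPQ le_sup_left hNQ le_sup_right)

end IsNucleus

section ProjectiveSpace

variable [Finite F]

theorem sub_one_mul_ncard_solids_ge (W : Submodule F (Fin 5 → F)) :
    (Nat.card F - 1) * {S : PGSolid F | W ≤ S.1}.ncard = Nat.card F ^ (5 - finrank F W) - 1 := by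
  have himage : Subtype.val '' {S : PGSolid F | W ≤ S.1} =
      {U : Submodule F (Fin 5 → F) | finrank F U + 1 = finrank F (Fin 5 → F) ∧ W ≤ U} := by
    ext U
    simp [and_comm]
  rw [← ncard_image_of_injective _ Subtype.val_injective, himage,
    sub_one_mul_ncard_hyperplanes_ge, finrank_fin_fun]

theorem ncard_solids_ge_not_ge {W : Submodule F (Fin 5 → F)} {N : PGPoint F}
    (hNW : ¬ N.1 ≤ W) :
    {S : PGSolid F | W ≤ S.1 ∧ ¬ N.1 ≤ S.1}.ncard = Nat.card F ^ (4 - finrank F W) := by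
  have hfin := finrank_sup_of_finrank_eq_one N.2 hNW
  obtain ⟨m, hm⟩ : ∃ m, finrank F W + m = 4 := by
    have := (W ⊔ N.1).finrank_le
    rw [finrank_fin_fun] at this
    exact ⟨4 - finrank F W, by omega⟩
  have hdiff : {S : PGSolid F | W ≤ S.1 ∧ ¬ N.1 ≤ S.1} =
      {S : PGSolid F | W ≤ S.1} \ {S : PGSolid F | W ⊔ N.1 ≤ S.1} := by
    ext S
    simp +contextual [sup_le_iff]
  have hsub : {S : PGSolid F | W ⊔ N.1 ≤ S.1} ⊆ {S : PGSolid F | W ≤ S.1} :=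
    fun _ hS => le_sup_left.trans (show W ⊔ N.1 ≤ _ from hS)
  have hW := sub_one_mul_ncard_solids_ge W
  have hWN := sub_one_mul_ncard_solids_ge (W ⊔ N.1)
  rw [show 5 - finrank F W = m + 1 by omega] at hW
  rw [show 5 - finrank F ↥(W ⊔ N.1) = m by omega] at hWN
  apply Nat.eq_of_mul_eq_mul_left (Nat.sub_pos_of_lt (Finite.one_lt_card (α := F)))
  rw [hdiff, ncard_sdiff hsub, Nat.mul_sub, hW, hWN, show 4 - finrank F W = m by omega,
    Nat.sub_sub_sub_cancel_right (Nat.one_le_pow _ _ Nat.card_pos), pow_succ',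
    Nat.sub_one_mul]

/-- Double count pairs `(v, P)` with `v ∈ NP`: a vector `v ∈ W \ N` spans with `N` a line, whose
unique point of `Q` is the only such `P`, while each `P` accounts for the `q² - q` vectors
of `NP \ N`. -/
theorem IsNucleus.sub_mul_ncard_pointsIn {Q : Set (PGPoint F)} {N : PGPoint F}
    (hN : IsNucleus Q N) (hNQ : N ∉ Q)
    {W : Submodule F (Fin 5 → F)} (hNW : N.1 ≤ W) :
    (Nat.card F ^ 2 - Nat.card F) * (pointsIn Q W).ncard =
      Nat.card F ^ finrank F W - Nat.card F := by
  have hline : ∀ P ∈ Q, finrank F ↥(N.1 ⊔ P.1) = 2 := fun P hP =>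
    PGPoint.finrank_sup_of_ne fun h => hNQ (h ▸ hP)
  have h := ncard_mul_eq_ncard_mul (m := 1) (n := Nat.card F ^ 2 - Nat.card F)
    (toFinite ((W : Set (Fin 5 → F)) \ N.1)) (toFinite (pointsIn Q W))
    (fun v P => v ∈ N.1 ⊔ P.1) (fun v hv => ?_) (fun P hP => ?_)
  · rw [ncard_sdiff (SetLike.coe_subset_coe.2 hNW), ncard_coe_submodule, ncard_coe_submodule,
      N.2, pow_one, mul_one] at h
    rw [mul_comm, ← h]
  · obtain ⟨hvW, hvN⟩ := hv
    let ℓ : PGLine F := ⟨N.1 ⊔ span F {v}, by rw [finrank_sup_span_singleton hvN, N.2]⟩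
    have hℓ : ∀ P ∈ Q, v ∈ N.1 ⊔ P.1 ↔ P.1 ≤ ℓ.1 := fun P hP => by
      refine ⟨fun hv => ?_, fun hPℓ => ?_⟩
      · have : ℓ.1 = N.1 ⊔ P.1 := eq_of_le_of_finrank_le
          (sup_le le_sup_left ((span_singleton_le_iff_mem _ _).2 hv)) (by rw [hline P hP, ℓ.2])
        exact this ▸ le_sup_right
      · have : N.1 ⊔ P.1 = ℓ.1 := eq_of_le_of_finrank_le (sup_le le_sup_left hPℓ)
          (by rw [hline P hP, ℓ.2])
        exact this ▸ (le_sup_right : span F {v} ≤ ℓ.1) (mem_span_singleton_self v)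
    have hℓW : ℓ.1 ≤ W := sup_le hNW ((span_singleton_le_iff_mem _ _).2 hvW)
    obtain ⟨P₀, hP₀Q, hP₀ℓ⟩ := hN.exists_mem_le (ℓ := ℓ) le_sup_left
    rw [ncard_eq_one]
    refine ⟨P₀, Set.ext fun P => ⟨fun ⟨⟨hPQ, _⟩, hvP⟩ => ?_, ?_⟩⟩
    · exact hN.eq_of_le le_sup_left hPQ ((hℓ P hPQ).1 hvP) hP₀Q hP₀ℓ
    · rintro rfl
      exact ⟨⟨hP₀Q, hP₀ℓ.trans hℓW⟩, (hℓ P hP₀Q).2 hP₀ℓ⟩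
  · obtain ⟨hPQ, hPW⟩ := hP
    have hfiber : {v ∈ (W : Set (Fin 5 → F)) \ N.1 | v ∈ N.1 ⊔ P.1} =
        ((N.1 ⊔ P.1 : Submodule F (Fin 5 → F)) : Set (Fin 5 → F)) \ N.1 := by
      ext v
      simp only [mem_sdiff, SetLike.mem_coe]
      exact ⟨fun ⟨⟨_, hvN⟩, hv⟩ => ⟨hv, hvN⟩, fun ⟨hv, hvN⟩ => ⟨⟨sup_le hNW hPW hv, hvN⟩, hv⟩⟩
    rw [hfiber, ncard_sdiff (SetLike.coe_subset_coe.2 le_sup_left), ncard_coe_submodule,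
      ncard_coe_submodule, hline P hPQ, N.2, pow_one]

def solidsThroughAvoiding (P N : PGPoint F) : Set (PGSolid F) :=
  {S | P.1 ≤ S.1 ∧ ¬ N.1 ≤ S.1}

theorem ncard_solidsThroughAvoiding {P N : PGPoint F} (hPN : P ≠ N) :
    (solidsThroughAvoiding P N).ncard = Nat.card F ^ 3 :=
  ncard_solids_ge_not_ge (fun h => hPN (PGPoint.eq_of_le h).symm) |>.trans (by rw [P.2])

theorem ncard_solidsThroughAvoiding_ge {P P' N : PGPoint F} (hPN : P ≠ N)
    (hP' : ¬ P'.1 ≤ P.1 ⊔ N.1) :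
    {S ∈ solidsThroughAvoiding P N | P'.1 ≤ S.1}.ncard = Nat.card F ^ 2 := by
  have hP'P : P ≠ P' := fun h => hP' (h ▸ le_sup_left)
  have hline : finrank F ↥(P.1 ⊔ P'.1) = 2 := PGPoint.finrank_sup_of_ne hP'P
  have hN : ¬ N.1 ≤ P.1 ⊔ P'.1 := fun hN => hP' <| by
    have : P.1 ⊔ N.1 = P.1 ⊔ P'.1 := eq_of_le_of_finrank_le (sup_le le_sup_left hN)
      (by rw [hline, PGPoint.finrank_sup_of_ne hPN])
    exact this ▸ le_sup_right
  have h := ncard_solids_ge_not_ge hN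
  rw [hline] at h
  refine Eq.trans ?_ h
  congr 1
  ext S
  simp only [solidsThroughAvoiding, mem_ofPred_eq, sup_le_iff]
  tauto

end ProjectiveSpace

def hyperbolicSolids (q : ℕ) (Q : Set (PGPoint F)) : Set (PGSolid F) :=
  {S | (pointsIn Q S.1).ncard = (q + 1) ^ 2}

namespace IsQuasiQuadric

variable {q : ℕ} {Q : Set (PGPoint F)} {N : PGPoint F}

theorem isNucleus (hQ : IsQuasiQuadric q Q N) : IsNucleus Q N := hQ.2.1

variable [Finite F]

theorem nucleus_notMem (hQ : IsQuasiQuadric q Q N) (hF : Nat.card F = q) : N ∉ Q :=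
  hQ.isNucleus.notMem <| by
    have : 0 < q := hF ▸ Nat.card_pos
    rw [hQ.1]; nlinarith

theorem ncard_pointsIn_of_nucleus_le (hQ : IsQuasiQuadric q Q N) (hF : Nat.card F = q)
    {S : PGSolid F} (hNS : N.1 ≤ S.1) : (pointsIn Q S.1).ncard = q ^ 2 + q + 1 := by
  have h := hQ.isNucleus.sub_mul_ncard_pointsIn (hQ.nucleus_notMem hF) hNS
  have hq : 1 < q := hF ▸ Finite.one_lt_card
  have hq2 : q < q ^ 2 := lt_self_pow₀ hq one_lt_two
  rw [S.2, hF] at h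
  refine Nat.eq_of_mul_eq_mul_left (Nat.sub_pos_of_lt hq2) (h.trans ?_)
  zify [hq2.le, (lt_self_pow₀ hq (by norm_num : 1 < 4)).le]
  ring

theorem not_nucleus_le_of_mem_hyperbolicSolids (hQ : IsQuasiQuadric q Q N)
    (hF : Nat.card F = q) {S : PGSolid F} (hS : S ∈ hyperbolicSolids q Q) : ¬ N.1 ≤ S.1 :=
  fun hNS => by
    have : q ^ 2 + q + 1 = (q + 1) ^ 2 := (hQ.ncard_pointsIn_of_nucleus_le hF hNS).symm.trans hS
    have : 0 < q := hF ▸ Nat.card_pos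
    nlinarith

theorem ncard_solidsThrough_nucleus (hQ : IsQuasiQuadric q Q N) (hF : Nat.card F = q) :
    (solidsThrough (hyperbolicSolids q Q) N).ncard = 0 := by
  rw [ncard_eq_zero]
  exact eq_empty_of_forall_notMem fun S ⟨hS, hNS⟩ =>
    hQ.not_nucleus_le_of_mem_hyperbolicSolids hF hS hNS

theorem sum_ncard_pointsIn_solidsThroughAvoiding (hQ : IsQuasiQuadric q Q N)
    (hF : Nat.card F = q) {P : PGPoint F} (hPN : P ≠ N) :
    ∑ S ∈ (toFinite (solidsThroughAvoiding P N)).toFinset, (pointsIn Q S.1).ncard =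
      (q ^ 2 + 1) * q ^ 3 + 2 * q * (solidsThrough (hyperbolicSolids q Q) P).ncard := by
  classical
  have hpts : ∀ S ∈ solidsThroughAvoiding P N, (pointsIn Q S.1).ncard =
      q ^ 2 + 1 + if S ∈ hyperbolicSolids q Q then 2 * q else 0 := by
    rintro S ⟨-, hNS⟩
    have : 0 < q := hF ▸ Nat.card_pos
    rcases hQ.2.2 S hNS with h | h
    · have hS : S ∉ hyperbolicSolids q Q := fun hS => by
        have : q ^ 2 + 1 = (q + 1) ^ 2 := h.symm.trans hS
        nlinarith
      rw [if_neg hS, h]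
    · rw [if_pos (show S ∈ hyperbolicSolids q Q from h), h]
      ring
  have hH : solidsThrough (hyperbolicSolids q Q) P =
      ↑((toFinite (solidsThroughAvoiding P N)).toFinset.filter (· ∈ hyperbolicSolids q Q)) := by
    ext S
    simp only [solidsThrough, Finset.coe_filter, Finite.mem_toFinset, solidsThroughAvoiding,
      mem_ofPred_eq]
    exact ⟨fun ⟨hS, hPS⟩ => ⟨⟨hPS, hQ.not_nucleus_le_of_mem_hyperbolicSolids hF hS⟩, hS⟩,
      fun ⟨⟨hPS, _⟩, hS⟩ => ⟨hS, hPS⟩⟩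
  rw [Finset.sum_congr rfl fun S hS => hpts S ((toFinite _).mem_toFinset.1 hS),
    Finset.sum_add_distrib, Finset.sum_const, ← ncard_eq_toFinset_card _ (toFinite _),
    ncard_solidsThroughAvoiding hPN, hF, ← Finset.sum_filter, Finset.sum_const, hH,
    ncard_coe_finset, smul_eq_mul, smul_eq_mul]
  ring

theorem sum_ncard_solidsThroughAvoiding_ge (hQ : IsQuasiQuadric q Q N)
    (hF : Nat.card F = q) {P P₀ : PGPoint F} (hPN : P ≠ N) (hP₀Q : P₀ ∈ Q)
    (hP₀ : P₀.1 ≤ P.1 ⊔ N.1) :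
    ∑ P' ∈ (toFinite Q).toFinset, {S ∈ solidsThroughAvoiding P N | P'.1 ≤ S.1}.ncard =
      {S ∈ solidsThroughAvoiding P N | P₀.1 ≤ S.1}.ncard + (q ^ 3 + q ^ 2 + q) * q ^ 2 := by
  have hP₀mem := (toFinite Q).mem_toFinset.2 hP₀Q
  have hother : ∀ P' ∈ (toFinite Q).toFinset.erase P₀,
      {S ∈ solidsThroughAvoiding P N | P'.1 ≤ S.1}.ncard = q ^ 2 := by
    intro P' hP'
    obtain ⟨hne, hP'Q⟩ := Finset.mem_erase.1 hP'
    rw [← hF]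
    refine ncard_solidsThroughAvoiding_ge hPN fun hP' => hne ?_
    exact hQ.isNucleus.eq_of_le (ℓ := ⟨_, PGPoint.finrank_sup_of_ne hPN⟩) le_sup_right
      ((toFinite Q).mem_toFinset.1 hP'Q) hP' hP₀Q hP₀
  rw [← Finset.add_sum_erase _ _ hP₀mem, Finset.sum_congr rfl hother, Finset.sum_const,
    Finset.card_erase_of_mem hP₀mem, ← ncard_eq_toFinset_card _ (toFinite _), hQ.1,
    smul_eq_mul, Nat.add_sub_cancel]

theorem two_mul_mul_ncard_solidsThrough (hQ : IsQuasiQuadric q Q N)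
    (hF : Nat.card F = q) {P P₀ : PGPoint F} (hPN : P ≠ N) (hP₀Q : P₀ ∈ Q)
    (hP₀ : P₀.1 ≤ P.1 ⊔ N.1) :
    2 * q * (solidsThrough (hyperbolicSolids q Q) P).ncard =
      q ^ 4 + {S ∈ solidsThroughAvoiding P N | P₀.1 ≤ S.1}.ncard := by
  have h := (hQ.sum_ncard_pointsIn_solidsThroughAvoiding hF hPN).symm.trans <|
    (sum_ncard_sep_comm (toFinite (solidsThroughAvoiding P N)) (toFinite Q)
      fun S P' => P'.1 ≤ S.1).trans <|
      hQ.sum_ncard_solidsThroughAvoiding_ge hF hPN hP₀Q hP₀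
  linarith

theorem two_mul_ncard_solidsThrough_of_mem (hQ : IsQuasiQuadric q Q N) (hF : Nat.card F = q)
    {P : PGPoint F} (hP : P ∈ Q) :
    2 * (solidsThrough (hyperbolicSolids q Q) P).ncard = q ^ 3 + q ^ 2 := by
  have hPN : P ≠ N := fun h => hQ.nucleus_notMem hF (h ▸ hP)
  have h := hQ.two_mul_mul_ncard_solidsThrough hF hPN hP le_sup_left
  rw [sep_eq_self_iff_mem_true.2 fun S hS => hS.1, ncard_solidsThroughAvoiding hPN, hF] at h
  have : 0 < q := hF ▸ Nat.card_pos
  refine Nat.eq_of_mul_eq_mul_left this ?_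
  linarith

theorem two_mul_ncard_solidsThrough_of_notMem (hQ : IsQuasiQuadric q Q N)
    (hF : Nat.card F = q) {P : PGPoint F} (hP : P ∉ Q) (hPN : P ≠ N) :
    2 * (solidsThrough (hyperbolicSolids q Q) P).ncard = q ^ 3 := by
  obtain ⟨P₀, hP₀Q, hP₀⟩ :=
    hQ.isNucleus.exists_mem_le (ℓ := ⟨_, PGPoint.finrank_sup_of_ne hPN⟩) le_sup_right
  have hPP₀ : P ≠ P₀ := by rintro rfl; exact hP hP₀Q
  have hline : P.1 ⊔ P₀.1 = P.1 ⊔ N.1 := eq_of_le_of_finrank_le (sup_le le_sup_left hP₀)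
    (by rw [PGPoint.finrank_sup_of_ne hPN, PGPoint.finrank_sup_of_ne hPP₀])
  have hempty : {S ∈ solidsThroughAvoiding P N | P₀.1 ≤ S.1} = ∅ :=
    eq_empty_of_forall_notMem fun S ⟨⟨hPS, hNS⟩, hP₀S⟩ =>
      hNS (le_sup_right.trans (hline ▸ sup_le hPS hP₀S))
  have h := hQ.two_mul_mul_ncard_solidsThrough hF hPN hP₀Q hP₀
  rw [hempty, ncard_empty] at h
  have : 0 < q := hF ▸ Nat.card_pos
  refine Nat.eq_of_mul_eq_mul_left this ?_
  linarith

end IsQuasiQuadric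

theorem stmt11_general (q : ℕ)
    (F : Type*) [Field F] [Fintype F] (hcard : Fintype.card F = q)
    (Q : Set (PGPoint F)) (N : PGPoint F) (hQ : IsQuasiQuadric q Q N)
    (H : Set (PGSolid F))
    (hH : H = {S : PGSolid F | (pointsIn Q S.1).ncard = (q + 1) ^ 2}) :
    (∀ P ∈ Q, 2 * (solidsThrough H P).ncard = q ^ 3 + q ^ 2) ∧
    (∀ P : PGPoint F, P ∉ Q → P ≠ N → 2 * (solidsThrough H P).ncard = q ^ 3) ∧
    (solidsThrough H N).ncard = 0 := by
  have hF : Nat.card F = q := Nat.card_eq_fintype_card.trans hcard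
  subst hH
  exact ⟨fun P hP => hQ.two_mul_ncard_solidsThrough_of_mem hF hP,
    fun P hP hPN => hQ.two_mul_ncard_solidsThrough_of_notMem hF hP hPN,
    hQ.ncard_solidsThrough_nucleus hF⟩

theorem stmt11 (q : ℕ) (hq : ∃ n : ℕ, 0 < n ∧ q = 2 ^ n)
    (F : Type*) [Field F] [Fintype F] (hcard : Fintype.card F = q)
    (Q : Set (PGPoint F)) (N : PGPoint F) (hQ : IsQuasiQuadric q Q N)
    (H : Set (PGSolid F))
    (hH : H = {S : PGSolid F | (pointsIn Q S.1).ncard = (q + 1) ^ 2}) :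
    (∀ P ∈ Q, 2 * (solidsThrough H P).ncard = q ^ 3 + q ^ 2) ∧
    (∀ P : PGPoint F, P ∉ Q → P ≠ N → 2 * (solidsThrough H P).ncard = q ^ 3) ∧
    (solidsThrough H N).ncard = 0 :=
  stmt11_general q F hcard Q N hQ H hH
end
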